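/- arXiv:2202.06111 — 5 statements merged into one kernel-verified Lean document; each statement's English description precedes it below -/
import Mathlib

section
/- The largest control invariant set R_X contained in X is contained in the union I⁺(G) of cells of the symbolic image from which an infinite admissible path starts. That is, R_X ⊆ ⋃{B ∈ C : there is an infinite admissible path starting at B}. -/
/-- The largest control invariant set `R_X` is contained in the union `I⁺(G)` of
cells of the symbolic image from which an infinite admissible path starts. -/
theorem RX_subset_Iplus {n m : ℕ}
    (X : Set (EuclideanSpace ℝ (Fin n))) (U : Set (EuclideanSpace ℝ (Fin m)))
    (hX : IsCompact X) (hU : IsCompact U)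
    (f : EuclideanSpace ℝ (Fin n) → EuclideanSpace ℝ (Fin m) → EuclideanSpace ℝ (Fin n))
    (C : Finset (Set (EuclideanSpace ℝ (Fin n))))
    (hcover : X ⊆ ⋃ B ∈ C, B)
    (RX : Set (EuclideanSpace ℝ (Fin n)))
    (hRX : RX = ⋃₀ {S | S ⊆ X ∧ ∀ x ∈ S, ∃ u ∈ U, f x u ∈ S}) :
    RX ⊆ ⋃ B ∈ {B : Set (EuclideanSpace ℝ (Fin n)) | B ∈ C ∧
      ∃ z : ℕ → Set (EuclideanSpace ℝ (Fin n)), z 0 = B ∧ (∀ k, z k ∈ C) ∧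
        ∀ k, (z (k + 1) ∩ {y | ∃ a ∈ z k, ∃ u ∈ U, y = f a u}).Nonempty}, B := by
  intro x hx
  rw [hRX] at hx
  obtain ⟨S, ⟨hSX, hinv⟩, hxS⟩ := hx
  have h : ∀ a : S, ∃ b : S, ∃ u ∈ U, (b : EuclideanSpace ℝ (Fin n)) = f a u := by
    rintro ⟨a, ha⟩
    obtain ⟨u, hu, hf⟩ := hinv a ha
    exact ⟨⟨f a u, hf⟩, u, hu, rfl⟩
  choose g u huU heq using h
  set seq : ℕ → S := fun k => g^[k] ⟨x, hxS⟩ with hseq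
  have hcell : ∀ k, ∃ B ∈ C, (seq k : EuclideanSpace ℝ (Fin n)) ∈ B := by
    intro k
    have := hcover (hSX (seq k).2)
    simpa using this
  choose z hzC hzmem using hcell
  have hiter : ∀ k, seq (k + 1) = g (seq k) := fun k =>
    Function.iterate_succ_apply' g k ⟨x, hxS⟩
  refine Set.mem_biUnion ⟨hzC 0, z, rfl, hzC, ?_⟩ ?_
  · intro k
    refine ⟨seq (k + 1), hzmem (k + 1), seq k, hzmem k, u (seq k), huU (seq k), ?_⟩
    rw [hiter k]
    exact heq (seq k)
  · have : seq 0 = ⟨x, hxS⟩ := rfl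
    simpa [this] using hzmem 0
end

section
/- If from a cell B of the symbolic image every admissible path is finite (terminates at a vertex with zero out-degree), then every system trajectory starting in B ∩ X leaves the covered region ⋃C in finitely many steps, for any choice of admissible inputs. -/
/-- If from a cell `B` every admissible path is finite (there is no infinite
admissible path starting at `B`), then every trajectory starting in `B ∩ X`
leaves the covered region in finitely many steps. -/
theorem no_infinite_path_implies_exit {α β : Type*} (X : Set α) (U : Set β)
    (f : α → β → α) (C : Finset (Set α)) (B : Set α) (hB : B ∈ C)
    (hfin : ¬ ∃ z : ℕ → Set α, z 0 = B ∧ (∀ k, z k ∈ C) ∧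
      ∀ k, (z (k + 1) ∩ {y | ∃ a ∈ z k, ∃ u ∈ U, y = f a u}).Nonempty)
    (x : ℕ → α) (u : ℕ → β) (hx0 : x 0 ∈ B ∩ X)
    (hu : ∀ k, u k ∈ U) (hstep : ∀ k, x (k + 1) = f (x k) (u k)) :
    ∃ k, x k ∉ ⋃ B' ∈ C, B' := by
  by_contra h
  push_neg at h
  have hmem : ∀ k, ∃ S, S ∈ C ∧ x k ∈ S := by
    intro k
    have := h k
    simpa using this
  choose S hSC hxS using hmem
  set z : ℕ → Set α := fun k => if k = 0 then B else S k with hz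
  have hxz : ∀ k, x k ∈ z k := by
    intro k
    rcases k with _ | k
    · simpa [z] using hx0.1
    · simpa [z] using hxS (k + 1)
  exact hfin ⟨z, by simp [z], fun k => by rcases k with _ | k <;> simp [z, hB, hSC],
    fun k => ⟨x (k + 1), hxz (k + 1), x k, hxz k, u k, hu k, hstep k⟩⟩
end

section
/- Let C and C' be two finite coverings of X by cells such that every cell of C' is contained in some cell of C (C' refines C). Then the set I⁺(G') of cells of the symbolic image over C' with infinite admissible paths satisfies ⋃I⁺(G') ⊆ ⋃I⁺(G), i.e., the outer approximation of the invariant set is monotone under refinement, provided every edge of G' projects to an edge of G. -/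
/-- Monotonicity of the outer approximation under refinement: if `C'` refines `C`
(via `π`) and every edge of the symbolic image `G'` projects to an edge of `G`,
then `⋃ I⁺(G') ⊆ ⋃ I⁺(G)`. -/
theorem Iplus_monotone_under_refinement {α : Type*} (F : α → Set α)
    (C C' : Finset (Set α)) (π : Set α → Set α)
    (hπ : ∀ B' ∈ C', π B' ∈ C ∧ B' ⊆ π B')
    (hproj : ∀ B' ∈ C', ∀ B'' ∈ C', (B'' ∩ ⋃ x ∈ B', F x).Nonempty →
      ((π B'') ∩ ⋃ x ∈ π B', F x).Nonempty) :
    (⋃ B ∈ {B : Set α | B ∈ C' ∧ ∃ z : ℕ → Set α, z 0 = B ∧ (∀ k, z k ∈ C') ∧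
        ∀ k, (z (k + 1) ∩ ⋃ x ∈ z k, F x).Nonempty}, B) ⊆
    ⋃ B ∈ {B : Set α | B ∈ C ∧ ∃ z : ℕ → Set α, z 0 = B ∧ (∀ k, z k ∈ C) ∧
        ∀ k, (z (k + 1) ∩ ⋃ x ∈ z k, F x).Nonempty}, B := by
  intro x hx
  simp only [Set.mem_iUnion, Set.mem_setOf_eq] at hx ⊢
  obtain ⟨B, ⟨⟨hB, z, hz0, hzC, hze⟩, hxB⟩⟩ := hx
  refine ⟨π B, ⟨⟨(hπ B hB).1, fun k => π (z k), by simp [hz0],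
    fun k => (hπ _ (hzC k)).1, fun k => hproj _ (hzC k) _ (hzC (k+1)) (hze k)⟩,
    (hπ B hB).2 hxB⟩⟩
end

section
/- For the symbolic image of F with respect to a covering C, if x ∈ B_i, u ∈ U of the control system f, and x⁺ = f(x,u) lies in a cell B_j of C, then B_i → B_j is an edge of the symbolic image; consequently any ε-orbit with ε less than the minimal gap between non-adjacent cells induces an admissible path. -/
/-- (a) If `x ∈ Bi`, `u ∈ U` and `f x u ∈ Bj`, then `Bi → Bj` is an edge of the
symbolic image. (b) Consequently any ε-orbit with ε at most the minimal gap
between non-adjacent cells induces an admissible path. -/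
theorem eps_orbit_induces_admissible_path {α β : Type*} [MetricSpace α]
    (U : Set β) (f : α → β → α) (C : Finset (Set α)) :
    (∀ Bi Bj : Set α, Bi ∈ C → Bj ∈ C → ∀ x ∈ Bi, ∀ u ∈ U, f x u ∈ Bj →
      (Bj ∩ {y | ∃ a ∈ Bi, ∃ v ∈ U, y = f a v}).Nonempty) ∧
    (∀ g ε : ℝ, ε ≤ g →
      (∀ B ∈ C, ∀ B' ∈ C, B' ∩ {y | ∃ a ∈ B, ∃ v ∈ U, y = f a v} = ∅ →
        ∀ y ∈ {y | ∃ a ∈ B, ∃ v ∈ U, y = f a v}, ∀ y' ∈ B', g ≤ dist y y') →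
      ∀ (x : ℕ → α) (u : ℕ → β) (z : ℕ → Set α),
        (∀ k, u k ∈ U) → (∀ k, dist (f (x k) (u k)) (x (k + 1)) < ε) →
        (∀ k, z k ∈ C) → (∀ k, x k ∈ z k) →
        ∀ k, (z (k + 1) ∩ {y | ∃ a ∈ z k, ∃ v ∈ U, y = f a v}).Nonempty) := by
  constructor
  · intro Bi Bj _ _ x hx u hu hfx
    exact ⟨f x u, hfx, x, hx, u, hu, rfl⟩
  · intro g ε hεg hgap x u z hu hd hzC hxz k
    by_contra hne
    rw [Set.not_nonempty_iff_eq_empty] at hne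
    have := hgap (z k) (hzC k) (z (k+1)) (hzC (k+1)) hne
      (f (x k) (u k)) ⟨x k, hxz k, u k, hu k, rfl⟩ (x (k+1)) (hxz (k+1))
    exact absurd (lt_of_lt_of_le (hd k) hεg) (not_lt.2 this)
end

section
/- If the covering C of X consists of cells B with diam(B) < ε for all B, then every admissible path {z_k} on the symbolic image corresponds to an ε-orbit of the system: there exist x_k ∈ z_k and u_k ∈ U with |f(x_k, u_k) − x_{k+1}| < ε for all k. -/
/-- If every cell of the covering has diameter less than ε, then every admissible
path on the symbolic image corresponds to an ε-orbit of the system. -/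
theorem admissible_path_is_eps_orbit {n m : ℕ} (U : Set (EuclideanSpace ℝ (Fin m)))
    (f : EuclideanSpace ℝ (Fin n) → EuclideanSpace ℝ (Fin m) → EuclideanSpace ℝ (Fin n))
    (C : Finset (Set (EuclideanSpace ℝ (Fin n)))) (ε : ℝ)
    (hdiam : ∀ B ∈ C, EMetric.diam B < ENNReal.ofReal ε)
    (z : ℕ → Set (EuclideanSpace ℝ (Fin n))) (hz : ∀ k, z k ∈ C)
    (hadm : ∀ k, (z (k + 1) ∩ {y | ∃ a ∈ z k, ∃ u ∈ U, y = f a u}).Nonempty) :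
    ∃ (x : ℕ → EuclideanSpace ℝ (Fin n)) (u : ℕ → EuclideanSpace ℝ (Fin m)),
      (∀ k, x k ∈ z k) ∧ (∀ k, u k ∈ U) ∧
      ∀ k, dist (f (x k) (u k)) (x (k + 1)) < ε := by
  choose y hy a ha u hu heq using hadm
  refine ⟨a, u, ha, hu, fun k => ?_⟩
  have h1 : f (a k) (u k) ∈ z (k + 1) := (heq k) ▸ hy k
  have h2 : a (k + 1) ∈ z (k + 1) := ha (k + 1)
  have := (EMetric.edist_le_diam_of_mem h1 h2).trans_lt (hdiam _ (hz (k + 1)))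
  rwa [edist_lt_ofReal] at this
end
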